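/- Let G be a connected chordal graph that is not complete and S an inclusion-minimal minimal vertex separator, with connected components Γ_1,...,Γ_M of G(V\S). Then for every clique tree T of G, the leaves of T meet the maximal cliques of at least two distinct components: there exist m ≠ m' such that some leaf of T lies in C(Γ_m ∪ S) and some leaf of T lies in C(Γ_{m'} ∪ S). -/

import Mathlib

/-!
Since `S` separates two vertices, `G` has two distinct maximal cliques, so the clique tree `T`
has leaves. A leaf contained in `S` serves for every component. Otherwise suppose all leaves lay
in `Γ ∪ S` for a single component `Γ`; then every leaf meets `Γ`. By the junction property the
maximal cliques meeting the connected set `Γ` form a subtree of `T`, and a subtree of a finite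
tree containing all its leaves is the whole tree (every vertex lies on a longest path, whose ends
are leaves). So every maximal clique meets `Γ`, which puts every vertex outside `S` into `Γ` and
contradicts that `S` separates.
-/

namespace Chordal

variable {V : Type*} [Fintype V]

/-- A closed walk has a chord: an edge of `G` joining two support vertices that is
not an edge of the walk. -/
def HasChord (G : SimpleGraph V) {u : V} (c : G.Walk u u) : Prop :=
  ∃ v w, v ∈ c.support ∧ w ∈ c.support ∧ G.Adj v w ∧ s(v, w) ∉ c.edges

/-- A graph is chordal if every cycle of length at least 4 has a chord. -/
def IsChordal (G : SimpleGraph V) : Prop :=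
  ∀ ⦃u : V⦄ (c : G.Walk u u), c.IsCycle → 4 ≤ c.length → HasChord G c

/-- A maximal clique of `G`. -/
def IsMaxClique (G : SimpleGraph V) (s : Set V) : Prop :=
  G.IsClique s ∧ ∀ t : Set V, G.IsClique t → s ⊆ t → s = t

/-- A maximal clique of the induced subgraph `G(W)`. -/
def IsMaxCliqueOn (G : SimpleGraph V) (W s : Set V) : Prop :=
  s ⊆ W ∧ G.IsClique s ∧ ∀ t : Set V, t ⊆ W → G.IsClique t → s ⊆ t → s = t

/-- There is a walk from `u` to `w` staying inside `W` and avoiding `S`. -/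
def ReachWithin (G : SimpleGraph V) (W S : Set V) (u w : V) : Prop :=
  ∃ p : G.Walk u w, ∀ x ∈ p.support, x ∈ W ∧ x ∉ S

/-- `S` separates `u` from `w` in the induced subgraph `G(W)`. -/
def SeparatesOn (G : SimpleGraph V) (W S : Set V) (u w : V) : Prop :=
  u ∈ W ∧ w ∈ W ∧ u ∉ S ∧ w ∉ S ∧ u ≠ w ∧ ¬ ReachWithin G W S u w

/-- `S` is a minimal vertex separator of the induced subgraph `G(W)`:
for some pair `u, w` it is an inclusion-minimal set separating `u` from `w`. -/
def IsMinSeparatorOn (G : SimpleGraph V) (W S : Set V) : Prop :=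
  S ⊆ W ∧ ∃ u w, SeparatesOn G W S u w ∧ ∀ S' ⊂ S, ¬ SeparatesOn G W S' u w

/-- `S` is a minimal vertex separator of `G`. -/
def IsMinSeparator (G : SimpleGraph V) (S : Set V) : Prop :=
  IsMinSeparatorOn G Set.univ S

/-- `S` is inclusion-minimal among the minimal vertex separators of `G`. -/
def IsInclMinSeparator (G : SimpleGraph V) (S : Set V) : Prop :=
  IsMinSeparator G S ∧ ∀ S' : Set V, IsMinSeparator G S' → S' ⊆ S → S' = S

/-- `Γ` is a connected component of `G(V \ S)`. -/
def IsCompOutside (G : SimpleGraph V) (S Γ : Set V) : Prop :=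
  ∃ u, u ∉ S ∧ Γ = {w | ReachWithin G Set.univ S u w}

/-- A vertex is simplicial if its neighborhood is a clique. -/
def IsSimplicial (G : SimpleGraph V) (v : V) : Prop :=
  G.IsClique (G.neighborSet v)

/-- The simplicial component of a clique `C`: the simplicial vertices of `G` in `C`. -/
def Simp (G : SimpleGraph V) (C : Set V) : Set V :=
  {v ∈ C | IsSimplicial G v}

/-- The non-simplicial component of a clique `C`. -/
def Sep (G : SimpleGraph V) (C : Set V) : Set V :=
  C \ Simp G C

/-- `C` is a boundary clique (simply separated clique): a maximal clique such that
`Sep C = C ∩ C'` for some other maximal clique `C'`. -/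
def IsBoundaryClique (G : SimpleGraph V) (C : Set V) : Prop :=
  IsMaxClique G C ∧ ∃ C' : Set V, IsMaxClique G C' ∧ C' ≠ C ∧ Sep G C = C ∩ C'

/-- The induced subgraph on `W`, kept on the same vertex type. -/
def restrictS (G : SimpleGraph V) (W : Set V) : SimpleGraph V where
  Adj u v := G.Adj u v ∧ u ∈ W ∧ v ∈ W
  symm := ⟨fun u v ⟨h, hu, hv⟩ => ⟨h.symm, hv, hu⟩⟩
  loopless := ⟨fun u ⟨h, _, _⟩ => G.loopless.irrefl u h⟩

/-- The vertex subset `A` induces a connected subgraph of `T`. -/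
def ConnOn {α : Type*} (T : SimpleGraph α) (A : Set α) : Prop :=
  A.Nonempty ∧ ∀ u ∈ A, ∀ v ∈ A, ∃ p : T.Walk u v, ∀ x ∈ p.support, x ∈ A

/-- The induced subgraph `G(W)` is complete. -/
def CompleteOn (G : SimpleGraph V) (W : Set V) : Prop :=
  ∀ u ∈ W, ∀ v ∈ W, u ≠ v → G.Adj u v

/-- A clique tree of `G`: a tree on the maximal cliques of `G` satisfying the
junction property. -/
def IsCliqueTree (G : SimpleGraph V) (T : SimpleGraph {s : Set V // IsMaxClique G s}) : Prop :=
  T.IsTree ∧ ∀ (C₁ C₂ : {s : Set V // IsMaxClique G s}) (p : T.Walk C₁ C₂), p.IsPath →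
    ∀ C₃ ∈ p.support, C₁.val ∩ C₂.val ⊆ C₃.val

/-- A leaf (endpoint) of a graph: a vertex with exactly one neighbor. -/
def IsLeaf {α : Type*} (T : SimpleGraph α) (a : α) : Prop :=
  ∃! b, T.Adj a b

/-- The union of the cliques preceding position `k` in a sequence. -/
def prefUnion {K : ℕ} (f : Fin K → Set V) (k : Fin K) : Set V :=
  {v | ∃ j, j < k ∧ v ∈ f j}

/-- A perfect sequence of the maximal cliques of the induced subgraph `G(W)`:
an enumeration of the maximal cliques of `G(W)` with the running intersection property. -/
def IsPerfectSeqOn (G : SimpleGraph V) (W : Set V) {K : ℕ} (f : Fin K → Set V) : Prop :=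
  Function.Injective f ∧ (∀ s : Set V, IsMaxCliqueOn G W s ↔ ∃ k, f k = s) ∧
  ∀ k : Fin K, 0 < (k : ℕ) →
    G.IsClique (prefUnion f k ∩ f k) ∧ ∃ k' : Fin K, k' < k ∧ prefUnion f k ∩ f k ⊆ f k'

/-- A perfect sequence of the maximal cliques of `G`. -/
def IsPerfectSeq (G : SimpleGraph V) {K : ℕ} (f : Fin K → Set V) : Prop :=
  Function.Injective f ∧ (∀ s : Set V, IsMaxClique G s ↔ ∃ k, f k = s) ∧
  ∀ k : Fin K, 0 < (k : ℕ) →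
    G.IsClique (prefUnion f k ∩ f k) ∧ ∃ k' : Fin K, k' < k ∧ prefUnion f k ∩ f k ⊆ f k'

/-- The closed neighborhood of a vertex. -/
def closedNbhd (G : SimpleGraph V) (v : V) : Set V :=
  insert v (G.neighborSet v)


open SimpleGraph

section Tree

variable {α : Type*} {T : SimpleGraph α}

lemma exists_isPath_mem_support_forall_length_le [Finite α] (D : α) :
    ∃ (a b : α) (p : T.Walk a b), p.IsPath ∧ D ∈ p.support ∧
      ∀ (a' b' : α) (q : T.Walk a' b'), q.IsPath → D ∈ q.support → q.length ≤ p.length := by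
  classical
  have := Fintype.ofFinite α
  let P : ℕ → Prop := fun n ↦
    ∃ (a b : α) (p : T.Walk a b), p.IsPath ∧ D ∈ p.support ∧ p.length = n
  obtain ⟨a, b, p, hp, hD, hlen⟩ : P (Nat.findGreatest P (Fintype.card α)) :=
    Nat.findGreatest_spec (Nat.zero_le _) ⟨D, D, .nil, by simp, by simp, rfl⟩
  exact ⟨a, b, p, hp, hD, fun a' b' q hq hDq ↦
    hlen ▸ Nat.le_findGreatest hq.length_lt.le ⟨a', b', q, hq, hDq, rfl⟩⟩

lemma _root_.SimpleGraph.IsAcyclic.isLeaf_of_adj_mem_support (hT : T.IsAcyclic) {a b : α}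
    {p : T.Walk a b} (hp : p.IsPath) (hb : ∃ c, T.Adj b c)
    (hsupp : ∀ c, T.Adj b c → c ∈ p.support) :
    IsLeaf T b := by
  obtain ⟨c, hc⟩ := hb
  have hnil : ¬ p.Nil := fun h ↦ by
    have := hsupp c hc
    rw [Walk.nil_iff_support_eq.mp h, List.mem_singleton] at this
    exact hc.ne (h.eq.symm.trans this.symm)
  exact ⟨p.penultimate, (p.adj_penultimate hnil).symm,
    fun c hc ↦ hT.eq_penultimate_of_adj_end hp hc (hsupp c hc)⟩

/-- The ends of a longest path through `D` are leaves. -/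
lemma _root_.SimpleGraph.IsTree.exists_isPath_mem_support_isLeaf [Finite α] [Nontrivial α]
    (hT : T.IsTree) (D : α) :
    ∃ (a b : α) (p : T.Walk a b), p.IsPath ∧ D ∈ p.support ∧ IsLeaf T a ∧ IsLeaf T b := by
  have end_isLeaf : ∀ (a b : α) (p : T.Walk a b), p.IsPath → D ∈ p.support →
      (∀ (a' b' : α) (q : T.Walk a' b'), q.IsPath → D ∈ q.support → q.length ≤ p.length) →
      IsLeaf T b := by
    intro a b p hp hD hmax
    refine hT.isAcyclic.isLeaf_of_adj_mem_support hp
      (hT.connected.preconnected.exists_adj_of_nontrivial b) fun c hc ↦ ?_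
    by_contra hcp
    have := hmax a c (p.concat hc) (hp.concat hcp hc) (p.support_subset_support_concat hc hD)
    rw [Walk.length_concat] at this
    omega
  obtain ⟨a, b, p, hp, hD, hmax⟩ := exists_isPath_mem_support_forall_length_le (T := T) D
  refine ⟨a, b, p, hp, hD, end_isLeaf b a p.reverse hp.reverse (by simpa using hD) ?_,
    end_isLeaf a b p hp hD hmax⟩
  simpa using hmax

lemma _root_.SimpleGraph.IsTree.mem_of_connOn_of_forall_isLeaf [Finite α] [Nontrivial α]
    (hT : T.IsTree) {A : Set α} (hA : ConnOn T A) (hleaf : ∀ L, IsLeaf T L → L ∈ A) (D : α) :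
    D ∈ A := by
  classical
  obtain ⟨a, b, p, hp, hD, ha, hb⟩ := hT.exists_isPath_mem_support_isLeaf D
  obtain ⟨q, hq⟩ := hA.2 a (hleaf a ha) b (hleaf b hb)
  have hqp : q.bypass = p := (hT.existsUnique_path a b).unique q.bypass_isPath hp
  exact hq D (q.support_bypass_subset_support (hqp ▸ hD))

end Tree

section Graph

variable {V : Type*} {G : SimpleGraph V} {W S : Set V}

lemma exists_isMaxClique_superset [Finite V] {s : Set V} (hs : G.IsClique s) :
    ∃ C, IsMaxClique G C ∧ s ⊆ C := by
  obtain ⟨C, hsC, hC⟩ := Finite.exists_le_maximal hs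
  exact ⟨C, ⟨hC.1, fun t ht hCt ↦ hCt.antisymm (hC.2 ht hCt)⟩, hsC⟩

lemma exists_isMaxClique_mem [Finite V] (v : V) : ∃ C, IsMaxClique G C ∧ v ∈ C := by
  obtain ⟨C, hC, hvC⟩ := exists_isMaxClique_superset (G.isClique_singleton v)
  exact ⟨C, hC, hvC rfl⟩

namespace ReachWithin

lemma refl {x : V} (hxW : x ∈ W) (hxS : x ∉ S) : ReachWithin G W S x x :=
  ⟨.nil, by simp [hxW, hxS]⟩

lemma symm {x y : V} (h : ReachWithin G W S x y) : ReachWithin G W S y x := by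
  obtain ⟨p, hp⟩ := h
  exact ⟨p.reverse, fun z hz ↦ hp z (by simpa using hz)⟩

lemma trans {x y z : V} (hxy : ReachWithin G W S x y) (hyz : ReachWithin G W S y z) :
    ReachWithin G W S x z := by
  obtain ⟨p, hp⟩ := hxy
  obtain ⟨q, hq⟩ := hyz
  refine ⟨p.append q, fun t ht ↦ ?_⟩
  rcases (Walk.mem_support_append_iff _ _).mp ht with ht | ht
  exacts [hp t ht, hq t ht]

lemma notMem_right {x y : V} (h : ReachWithin G W S x y) : y ∉ S := by
  obtain ⟨p, hp⟩ := h
  exact (hp y p.end_mem_support).2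

end ReachWithin

lemma reachWithin_of_mem_clique {C : Set V} (hC : G.IsClique C) {x y : V} (hx : x ∈ C)
    (hy : y ∈ C) (hxS : x ∉ S) (hyS : y ∉ S) : ReachWithin G Set.univ S x y := by
  obtain rfl | hxy := eq_or_ne x y
  · exact .refl trivial hxS
  · refine ⟨.cons (hC hx hy hxy) .nil, fun z hz ↦ ?_⟩
    simp only [Walk.support_cons, Walk.support_nil, List.mem_cons, List.not_mem_nil,
      or_false] at hz
    rcases hz with rfl | rfl
    exacts [⟨trivial, hxS⟩, ⟨trivial, hyS⟩]

def compOutside (G : SimpleGraph V) (S : Set V) (x : V) : Set V :=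
  {y | ReachWithin G Set.univ S x y}

lemma isCompOutside_compOutside {x : V} (hx : x ∉ S) :
    IsCompOutside G S (compOutside G S x) :=
  ⟨x, hx, rfl⟩

lemma mem_compOutside_self {x : V} (hx : x ∉ S) : x ∈ compOutside G S x :=
  .refl trivial hx

lemma compOutside_ne {x y : V} (hyS : y ∉ S) (hy : y ∉ compOutside G S x) :
    compOutside G S x ≠ compOutside G S y :=
  fun h ↦ hy (h ▸ mem_compOutside_self hyS)

lemma connOn_compOutside {x : V} (hx : x ∉ S) : ConnOn G (compOutside G S x) := by
  classical
  refine ⟨⟨x, mem_compOutside_self hx⟩, fun y ⟨p, hp⟩ z ⟨q, hq⟩ ↦ ⟨p.reverse.append q, ?_⟩⟩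
  intro t ht
  rcases (Walk.mem_support_append_iff _ _).mp ht with ht | ht
  · rw [Walk.support_reverse, List.mem_reverse] at ht
    exact ⟨p.takeUntil t ht, fun s hs ↦ hp s (p.support_takeUntil_subset_support ht hs)⟩
  · exact ⟨q.takeUntil t ht, fun s hs ↦ hq s (q.support_takeUntil_subset_support ht hs)⟩

lemma subset_compOutside_union {C : Set V} (hC : G.IsClique C) {x : V} (hxC : x ∈ C)
    (hxS : x ∉ S) : C ⊆ compOutside G S x ∪ S := fun y hyC ↦
  (em (y ∈ S)).elim Or.inr fun hyS ↦ Or.inl (reachWithin_of_mem_clique hC hxC hyC hxS hyS)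

lemma nontrivial_maxClique_of_not_reachWithin [Finite V] {x y : V} (hxS : x ∉ S) (hyS : y ∉ S)
    (hxy : ¬ ReachWithin G Set.univ S x y) : Nontrivial {s : Set V // IsMaxClique G s} := by
  obtain ⟨Cx, hCx, hxC⟩ := exists_isMaxClique_mem (G := G) x
  obtain ⟨Cy, hCy, hyC⟩ := exists_isMaxClique_mem (G := G) y
  refine ⟨⟨Cx, hCx⟩, ⟨Cy, hCy⟩, fun h ↦ hxy ?_⟩
  have hCxy : Cx = Cy := congrArg Subtype.val h
  exact reachWithin_of_mem_clique hCx.1 hxC (hCxy ▸ hyC) hxS hyS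

end Graph

namespace IsCliqueTree

variable {V : Type*} {G : SimpleGraph V} {T : SimpleGraph {s : Set V // IsMaxClique G s}}

lemma exists_walk_forall_mem (hT : IsCliqueTree G T) {C C' : {s : Set V // IsMaxClique G s}}
    {v : V} (hv : v ∈ C.val) (hv' : v ∈ C'.val) :
    ∃ p : T.Walk C C', ∀ E ∈ p.support, v ∈ E.val := by
  classical
  obtain ⟨q⟩ := hT.1.connected.preconnected C C'
  exact ⟨q.bypass, fun E hE ↦ hT.2 C C' q.bypass q.bypass_isPath E hE ⟨hv, hv'⟩⟩

/-- Consecutive vertices of `p` share a maximal clique, and the cliques containing a fixed vertex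
form a subtree of `T`. -/
lemma exists_walk_forall_meet (hT : IsCliqueTree G T) [Finite V] {Γ : Set V} {x x' : V}
    (p : G.Walk x x') (hp : ∀ z ∈ p.support, z ∈ Γ) {C C' : {s : Set V // IsMaxClique G s}}
    (hx : x ∈ C.val) (hx' : x' ∈ C'.val) :
    ∃ W : T.Walk C C', ∀ E ∈ W.support, (E.val ∩ Γ).Nonempty := by
  induction p generalizing C with
  | nil =>
    obtain ⟨W, hW⟩ := hT.exists_walk_forall_mem hx hx'
    exact ⟨W, fun E hE ↦ ⟨_, hW E hE, hp _ (Walk.start_mem_support _)⟩⟩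
  | @cons x y x' hxy q ih =>
    obtain ⟨E, hE, hxyE⟩ :=
      exists_isMaxClique_superset (G.isClique_pair.mpr fun _ ↦ hxy)
    obtain ⟨W₁, hW₁⟩ := hT.exists_walk_forall_mem (C' := ⟨E, hE⟩) hx (hxyE (.inl rfl))
    obtain ⟨W₂, hW₂⟩ :=
      ih (fun z hz ↦ hp z (List.mem_cons_of_mem _ hz)) (C := ⟨E, hE⟩) (hxyE (.inr rfl)) hx'
    refine ⟨W₁.append W₂, fun F hF ↦ ?_⟩
    rcases (Walk.mem_support_append_iff _ _).mp hF with hF | hF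
    · exact ⟨x, hW₁ F hF, hp x (Walk.start_mem_support _)⟩
    · exact hW₂ F hF

lemma connOn_meet (hT : IsCliqueTree G T) [Finite V] {Γ : Set V} (hΓ : ConnOn G Γ) :
    ConnOn T {C | (C.val ∩ Γ).Nonempty} := by
  obtain ⟨x, hx⟩ := hΓ.1
  obtain ⟨C, hC, hxC⟩ := exists_isMaxClique_mem (G := G) x
  refine ⟨⟨⟨C, hC⟩, x, hxC, hx⟩, fun D ⟨y, hyD, hy⟩ D' ⟨y', hyD', hy'⟩ ↦ ?_⟩
  obtain ⟨p, hp⟩ := hΓ.2 y hy y' hy'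
  exact hT.exists_walk_forall_meet p hp hyD hyD'

lemma mem_compOutside_of_forall_isLeaf (hT : IsCliqueTree G T) [Finite V]
    [Nontrivial {s : Set V // IsMaxClique G s}] {S : Set V} {x : V} (hx : x ∉ S)
    (hleaf : ∀ L, IsLeaf T L → (L.val ∩ compOutside G S x).Nonempty) {z : V} (hz : z ∉ S) :
    z ∈ compOutside G S x := by
  obtain ⟨D, hD, hzD⟩ := exists_isMaxClique_mem (G := G) z
  obtain ⟨v, hvD, hv⟩ :=
    hT.1.mem_of_connOn_of_forall_isLeaf (hT.connOn_meet (connOn_compOutside hx)) hleaf ⟨D, hD⟩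
  exact ReachWithin.trans hv (reachWithin_of_mem_clique hD.1 hvD hzD hv.notMem_right hz)

end IsCliqueTree

theorem leaves_meet_two_components_general {V : Type*} [Fintype V]
    (G : SimpleGraph V)
    (S : Set V) (hS : IsInclMinSeparator G S)
    (T : SimpleGraph {s : Set V // IsMaxClique G s}) (hT : IsCliqueTree G T) :
    ∃ Γ Γ' : Set V, IsCompOutside G S Γ ∧ IsCompOutside G S Γ' ∧ Γ ≠ Γ' ∧
      (∃ C₁ : {s : Set V // IsMaxClique G s}, IsLeaf T C₁ ∧ C₁.val ⊆ Γ ∪ S) ∧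
      (∃ C₂ : {s : Set V // IsMaxClique G s}, IsLeaf T C₂ ∧ C₂.val ⊆ Γ' ∪ S) := by
  obtain ⟨-, u, w, ⟨-, -, huS, hwS, -, huw⟩, -⟩ := hS.1
  have := nontrivial_maxClique_of_not_reachWithin huS hwS huw
  by_cases hLS : ∃ L, IsLeaf T L ∧ L.val ⊆ S
  · obtain ⟨L, hL, hLS⟩ := hLS
    refine ⟨_, _, isCompOutside_compOutside huS, isCompOutside_compOutside hwS,
      compOutside_ne hwS huw,
      ⟨L, hL, hLS.trans Set.subset_union_right⟩, ⟨L, hL, hLS.trans Set.subset_union_right⟩⟩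
  push Not at hLS
  obtain ⟨L₀, -, -, -, -, hL₀, -⟩ := hT.1.exists_isPath_mem_support_isLeaf (Classical.arbitrary _)
  obtain ⟨x, hxL₀, hxS⟩ := Set.not_subset.mp (hLS L₀ hL₀)
  by_cases hall : ∀ L, IsLeaf T L → L.val ⊆ compOutside G S x ∪ S
  · have hmeet : ∀ L, IsLeaf T L → (L.val ∩ compOutside G S x).Nonempty := fun L hL ↦ by
      obtain ⟨y, hyL, hyS⟩ := Set.not_subset.mp (hLS L hL)
      exact ⟨y, hyL, (hall L hL hyL).resolve_right hyS⟩
    exact absurd ((hT.mem_compOutside_of_forall_isLeaf hxS hmeet huS).symm.trans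
      (hT.mem_compOutside_of_forall_isLeaf hxS hmeet hwS)) huw
  push Not at hall
  obtain ⟨L, hL, hLsub⟩ := hall
  obtain ⟨y, hyL, hy⟩ := Set.not_subset.mp hLsub
  obtain ⟨hyx, hyS⟩ := not_or.mp hy
  exact ⟨_, _, isCompOutside_compOutside hxS, isCompOutside_compOutside hyS,
    compOutside_ne hyS hyx, ⟨L₀, hL₀, subset_compOutside_union L₀.2.1 hxL₀ hxS⟩,
    ⟨L, hL, subset_compOutside_union L.2.1 hyL hyS⟩⟩

theorem leaves_meet_two_components {V : Type*} [Fintype V]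
    (G : SimpleGraph V) (hconn : G.Connected) (hch : IsChordal G)
    (hnc : ¬ CompleteOn G Set.univ)
    (S : Set V) (hS : IsInclMinSeparator G S)
    (T : SimpleGraph {s : Set V // IsMaxClique G s}) (hT : IsCliqueTree G T) :
    ∃ Γ Γ' : Set V, IsCompOutside G S Γ ∧ IsCompOutside G S Γ' ∧ Γ ≠ Γ' ∧
      (∃ C₁ : {s : Set V // IsMaxClique G s}, IsLeaf T C₁ ∧ C₁.val ⊆ Γ ∪ S) ∧
      (∃ C₂ : {s : Set V // IsMaxClique G s}, IsLeaf T C₂ ∧ C₂.val ⊆ Γ' ∪ S) :=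
  leaves_meet_two_components_general G S hS T hT

end Chordal
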